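/- Let k ∈ {1, 2, 3}. Then the elliptic zeta value obeys the additive three-term relation Z_k(τ,σ) = Z_k(τ, τ+σ) + Z_k(τ+σ, σ) for all τ, σ ∈ H with σ/τ ∈ H. -/

import Mathlib

open Complex Filter Topology

/-- The open upper half-plane as a subset of `ℂ`. -/
def UHP : Set ℂ := {z : ℂ | 0 < z.im}

/-- `qexp τ = e^{2πiτ}`. -/
noncomputable def qexp (τ : ℂ) : ℂ := Complex.exp (2 * Real.pi * Complex.I * τ)

/-- Elliptic zeta values `Z_k(τ,σ)`. -/
noncomputable def ellipticZeta (k : ℕ) (τ σ : ℂ) : ℂ :=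
  -((2 * (Real.pi : ℂ) * Complex.I) ^ k / (Nat.factorial (k - 1) : ℂ)) *
    ∑' j : ℕ+, (j : ℂ) ^ (k - 1) *
      (qexp τ ^ (j : ℕ) - (-1 : ℂ) ^ k * qexp σ ^ (j : ℕ)) /
      ((1 - qexp τ ^ (j : ℕ)) * (1 - qexp σ ^ (j : ℕ)))

/-- `D_k(q)`: the normalized generating function of sums of `(k-1)`-st powers of divisors. -/
noncomputable def Dk (k : ℕ) (q : ℂ) : ℂ :=
  ((-2 * (Real.pi : ℂ) * Complex.I) ^ k / (Nat.factorial (k - 1) : ℂ)) *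
    ∑' n : ℕ+, (∑ d ∈ Nat.divisors (n : ℕ), (d : ℂ) ^ (k - 1)) * q ^ (n : ℕ)

/-- Ruijsenaars's elliptic gamma function. -/
noncomputable def ellipticGamma (z τ σ : ℂ) : ℂ :=
  ∏' p : ℕ × ℕ,
    (1 - qexp τ ^ (p.1 + 1) * qexp σ ^ (p.2 + 1) * Complex.exp (-(2 * Real.pi * Complex.I) * z)) /
    (1 - qexp τ ^ p.1 * qexp σ ^ p.2 * Complex.exp (2 * Real.pi * Complex.I * z))

/-- The modified theta function `θ₀(z,τ)`. -/
noncomputable def theta0 (z τ : ℂ) : ℂ :=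
  ∏' j : ℕ, (1 - qexp τ ^ (j + 1) * Complex.exp (-(2 * Real.pi * Complex.I) * z)) *
            (1 - qexp τ ^ j * Complex.exp (2 * Real.pi * Complex.I * z))

/-- A modular form of weight `k` for `SL(2,ℤ)`: a holomorphic function on the
upper half-plane transforming with weight `k` under `SL(2,ℤ)` and bounded as `Im τ → ∞`. -/
def IsModularForm (k : ℕ) (G : ℂ → ℂ) : Prop :=
  DifferentiableOn ℂ G UHP ∧
  (∀ A : Matrix.SpecialLinearGroup (Fin 2) ℤ, ∀ τ ∈ UHP,
      G (((A 0 0 : ℤ) * τ + (A 0 1 : ℤ)) / ((A 1 0 : ℤ) * τ + (A 1 1 : ℤ))) =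
        ((A 1 0 : ℤ) * τ + (A 1 1 : ℤ)) ^ k * G τ) ∧
  (∃ C : ℝ, ∀ τ ∈ UHP, 1 ≤ τ.im → ‖G τ‖ ≤ C)

/-- All factors in the defining double product of the elliptic gamma function are nonzero. -/
def EGFactorsNeZero (z τ σ : ℂ) : Prop :=
  ∀ j ℓ : ℕ,
    (1 - qexp τ ^ (j + 1) * qexp σ ^ (ℓ + 1) * Complex.exp (-(2 * Real.pi * Complex.I) * z)) ≠ 0 ∧
    (1 - qexp τ ^ j * qexp σ ^ ℓ * Complex.exp (2 * Real.pi * Complex.I * z)) ≠ 0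

/-! Since `qexp (τ + σ) = qexp τ * qexp σ`, the relation holds summand by summand: with
`a = q^j`, `b = r^j` and `e = (-1)^k`, it is the partial-fraction identity
`(a - e b)/((1-a)(1-b)) = (a - e ab)/((1-a)(1-ab)) + (ab - e b)/((1-ab)(1-b))`.
All three series converge absolutely for `|q|, |r| < 1`, so they may be added termwise. -/

section Algebra

variable {K : Type*} [Field K]

def ellipticZetaTerm (k : ℕ) (q r : K) (n : ℕ) : K :=
  (n : K) ^ (k - 1) * (q ^ n - (-1) ^ k * r ^ n) / ((1 - q ^ n) * (1 - r ^ n))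

theorem ellipticZetaTerm_eq_add {k n : ℕ} {q r : K} (hq : 1 - q ^ n ≠ 0) (hr : 1 - r ^ n ≠ 0)
    (hqr : 1 - (q * r) ^ n ≠ 0) :
    ellipticZetaTerm k q r n = ellipticZetaTerm k q (q * r) n + ellipticZetaTerm k (q * r) r n := by
  unfold ellipticZetaTerm
  field_simp
  ring

end Algebra

section Norms

variable {R : Type*} [NormedDivisionRing R]

theorem one_sub_norm_le_norm_one_sub_pow {q : R} (hq : ‖q‖ ≤ 1) {n : ℕ} (hn : n ≠ 0) :
    1 - ‖q‖ ≤ ‖1 - q ^ n‖ :=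
  calc 1 - ‖q‖ ≤ 1 - ‖q‖ ^ n := by gcongr; exact pow_le_of_le_one (norm_nonneg q) hq hn
    _ = ‖(1 : R)‖ - ‖q ^ n‖ := by rw [norm_one, norm_pow]
    _ ≤ ‖1 - q ^ n‖ := norm_sub_norm_le _ _

theorem one_sub_pow_ne_zero_of_norm_lt_one {q : R} (hq : ‖q‖ < 1) {n : ℕ} (hn : n ≠ 0) :
    1 - q ^ n ≠ 0 :=
  norm_pos_iff.mp <| (sub_pos.mpr hq).trans_le (one_sub_norm_le_norm_one_sub_pow hq.le hn)

end Norms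

theorem norm_ellipticZetaTerm_le (k : ℕ) {q r : ℂ} (hq : ‖q‖ < 1) (hr : ‖r‖ < 1) {n : ℕ}
    (hn : n ≠ 0) :
    ‖ellipticZetaTerm k q r n‖ ≤
      ((1 - ‖q‖) * (1 - ‖r‖))⁻¹ * ((n : ℝ) ^ (k - 1) * ‖q‖ ^ n + (n : ℝ) ^ (k - 1) * ‖r‖ ^ n) := by
  have hnum : ‖(n : ℂ) ^ (k - 1) * (q ^ n - (-1) ^ k * r ^ n)‖ ≤
      (n : ℝ) ^ (k - 1) * ‖q‖ ^ n + (n : ℝ) ^ (k - 1) * ‖r‖ ^ n := by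
    rw [norm_mul, norm_pow, Complex.norm_natCast, ← mul_add]
    gcongr
    calc ‖q ^ n - (-1) ^ k * r ^ n‖ ≤ ‖q ^ n‖ + ‖(-1) ^ k * r ^ n‖ := norm_sub_le _ _
      _ = ‖q‖ ^ n + ‖r‖ ^ n := by simp [norm_pow]
  have hden : (1 - ‖q‖) * (1 - ‖r‖) ≤ ‖(1 - q ^ n) * (1 - r ^ n)‖ := by
    rw [norm_mul]
    exact mul_le_mul (one_sub_norm_le_norm_one_sub_pow hq.le hn)
      (one_sub_norm_le_norm_one_sub_pow hr.le hn) (sub_nonneg.mpr hr.le) (norm_nonneg _)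
  have hq' := sub_pos.mpr hq
  have hr' := sub_pos.mpr hr
  rw [ellipticZetaTerm, norm_div, inv_mul_eq_div]
  exact div_le_div₀ (by positivity) hnum (by positivity) hden

theorem summable_ellipticZetaTerm (k : ℕ) {q r : ℂ} (hq : ‖q‖ < 1) (hr : ‖r‖ < 1) :
    Summable fun j : ℕ+ => ellipticZetaTerm k q r j := by
  have hgeom {x : ℂ} (hx : ‖x‖ < 1) : Summable fun n : ℕ => (n : ℝ) ^ (k - 1) * ‖x‖ ^ n :=
    summable_pow_mul_geometric_of_norm_lt_one _ (by rwa [norm_norm])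
  exact Summable.of_norm_bounded
    ((((hgeom hq).add (hgeom hr)).mul_left _).comp_injective PNat.coe_injective)
    fun j => norm_ellipticZetaTerm_le k hq hr j.ne_zero

theorem norm_qexp_lt_one {τ : ℂ} (hτ : τ ∈ UHP) : ‖qexp τ‖ < 1 := by
  rw [qexp, Complex.norm_exp, Real.exp_lt_one_iff]
  have : 0 < τ.im := hτ
  simp only [mul_re, mul_im, ofReal_re, ofReal_im, re_ofNat, im_ofNat, I_re, I_im]
  nlinarith [Real.pi_pos]

theorem qexp_add (τ σ : ℂ) : qexp (τ + σ) = qexp τ * qexp σ := by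
  rw [qexp, qexp, qexp, ← Complex.exp_add]
  ring_nf

theorem ellipticZeta_eq_tsum (k : ℕ) (τ σ : ℂ) :
    ellipticZeta k τ σ = -((2 * (Real.pi : ℂ) * Complex.I) ^ k / (Nat.factorial (k - 1) : ℂ)) *
      ∑' j : ℕ+, ellipticZetaTerm k (qexp τ) (qexp σ) j :=
  rfl

theorem ellipticZeta_additive_three_term_low_general
    (k : ℕ) (τ σ : ℂ)
    (hτ : τ ∈ UHP) (hσ : σ ∈ UHP) :
    ellipticZeta k τ σ = ellipticZeta k τ (τ + σ) + ellipticZeta k (τ + σ) σ := by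
  have hq := norm_qexp_lt_one hτ
  have hr := norm_qexp_lt_one hσ
  have hqr : ‖qexp τ * qexp σ‖ < 1 := by
    rw [← qexp_add]
    exact norm_qexp_lt_one (by simpa [UHP] using add_pos hτ hσ)
  have htermwise (j : ℕ+) :=
    ellipticZetaTerm_eq_add (k := k) (one_sub_pow_ne_zero_of_norm_lt_one hq j.ne_zero)
      (one_sub_pow_ne_zero_of_norm_lt_one hr j.ne_zero)
      (one_sub_pow_ne_zero_of_norm_lt_one hqr j.ne_zero)
  rw [ellipticZeta_eq_tsum, ellipticZeta_eq_tsum, ellipticZeta_eq_tsum, qexp_add,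
    tsum_congr htermwise,
    (summable_ellipticZetaTerm k hq hqr).tsum_add (summable_ellipticZetaTerm k hqr hr)]
  ring

/-- additive three-term relation for `Z_k`, `k ∈ {1,2,3}`,
for `τ, σ ∈ H` with `σ/τ ∈ H`. -/
theorem ellipticZeta_additive_three_term_low
    (k : ℕ) (hk : k ∈ ({1, 2, 3} : Set ℕ)) (τ σ : ℂ)
    (hτ : τ ∈ UHP) (hσ : σ ∈ UHP) (hστ : σ / τ ∈ UHP) :
    ellipticZeta k τ σ = ellipticZeta k τ (τ + σ) + ellipticZeta k (τ + σ) σ :=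
  ellipticZeta_additive_three_term_low_general k τ σ hτ hσ
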